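/- Let R be a graded ring in non-negative degrees, M a graded R-module, M' ⊆ M a homogeneous submodule, N ⊆ M/M' a submodule, and Ñ its preimage in M. If {x̃_i} is a Gröbner basis for Ñ, then the images x_i of the x̃_i in M/M' form a Gröbner basis for N. -/

import Mathlib

/-!
Homogeneous components commute with `M → M ⧸ M'`. Hence a lift of `y ∈ N`, with its components
above `mdeg y` dropped, lies in `Ñ` and has an initial term mapping to `ini y`, while the image of
`ini x̃ᵢ` is either `0` or `ini xᵢ`. Mapping `in(Ñ) = span {ini x̃ᵢ}` to the quotient therefore
puts every `ini y` in `span {ini xᵢ}`.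
-/

open DirectSum

section Defs

variable {A : Type*} [CommRing A] (𝒜 : ℤ → AddSubgroup A) [GradedRing 𝒜]
variable {M : Type*} [AddCommGroup M] [Module A M] (ℳ : ℤ → AddSubgroup M)
  [DirectSum.Decomposition ℳ]

/-- The degree of an element of a graded object: the largest `n` whose homogeneous
component is nonzero (junk value for `x = 0`). -/
noncomputable def mdeg {σ M : Type*} [AddCommMonoid M] [SetLike σ M] [AddSubmonoidClass σ M]
    (ℳ : ℤ → σ) [DirectSum.Decomposition ℳ] (x : M) : ℤ :=
  sSup {n : ℤ | (DirectSum.decompose ℳ x n : M) ≠ 0}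

/-- The initial (top-degree) term of an element. -/
noncomputable def ini {σ M : Type*} [AddCommMonoid M] [SetLike σ M] [AddSubmonoidClass σ M]
    (ℳ : ℤ → σ) [DirectSum.Decomposition ℳ] (x : M) : M :=
  (DirectSum.decompose ℳ x (mdeg ℳ x) : M)

/-- The initial submodule of a submodule `N`: generated by initial terms of nonzero
elements of `N`. -/
def iniSub (N : Submodule A M) : Submodule A M :=
  Submodule.span A {m : M | ∃ x ∈ N, x ≠ 0 ∧ ini ℳ x = m}

/-- The ring grading is supported in non-negative degrees. -/
def RingNonnegGraded : Prop := ∀ n < (0 : ℤ), ∀ a ∈ 𝒜 n, a = (0 : A)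

/-- The module grading is bounded below. -/
def ModuleBddBelow : Prop := ∃ n₀ : ℤ, ∀ n < n₀, ∀ m ∈ ℳ n, m = (0 : M)

/-- A family of elements of `N` is a Gröbner basis for `N`. -/
def IsGrobnerBasis {I : Type*} (N : Submodule A M) (x : I → M) : Prop :=
  (∀ i, x i ∈ N) ∧
    Submodule.span A (Set.range fun i => ini ℳ (x i)) = iniSub ℳ N

/-- `a` gives a reduced expression `y = ∑ aᵢ xᵢ` with `deg aᵢ + deg xᵢ ≤ deg y`. -/
def IsReducedExpr {I : Type*} (x : I → M) (y : M) (a : I →₀ A) : Prop :=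
  y = a.sum (fun i c => c • x i) ∧
    ∀ i ∈ a.support, mdeg 𝒜 (a i) + mdeg ℳ (x i) ≤ mdeg ℳ y

/-- Set version of a Gröbner basis. -/
def IsGrobnerBasisSet (N : Submodule A M) (s : Set M) : Prop :=
  s ⊆ (N : Set M) ∧ Submodule.span A (ini ℳ '' s) = iniSub ℳ N

/-- `y` has a reduced expression in terms of the elements of `s`. -/
def HasReducedExprSet (s : Set M) (y : M) : Prop :=
  ∃ a : M →₀ A, ↑a.support ⊆ s ∧ y = a.sum (fun m c => c • m) ∧
    ∀ m ∈ a.support, mdeg 𝒜 (a m) + mdeg ℳ m ≤ mdeg ℳ y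

/-- A submodule is homogeneous when it contains all homogeneous components of its
elements. -/
def IsHomogSubmodule (N : Submodule A M) : Prop :=
  ∀ x ∈ N, ∀ n : ℤ, (DirectSum.decompose ℳ x n : M) ∈ N

/-- Graded-coherent: finitely generated, and every finitely generated homogeneous
submodule is finitely presented. -/
def GradedCoherent : Prop :=
  Module.Finite A M ∧ ∀ N : Submodule A M, N.FG → IsHomogSubmodule ℳ N →
    Module.FinitePresentation A N

/-- Gröbner-coherent: graded-coherent, and every finitely generated (possibly
inhomogeneous) submodule admits a finite Gröbner basis. -/
def GrobnerCoherent : Prop :=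
  GradedCoherent (A := A) ℳ ∧ ∀ N : Submodule A M, N.FG →
    ∃ s : Finset M, IsGrobnerBasisSet ℳ N ↑s

/-- A homogeneous generating family of syzygies of the initial terms of the `x i`
(with the free module graded by `deg eᵢ = deg xᵢ`). -/
def IsHomogSyzygyGens {I J : Type*} (x : I → M) (c : J → I →₀ A) : Prop :=
  (∀ j, ∃ d : ℤ, ∀ i, c j i ∈ 𝒜 (d - mdeg ℳ (x i))) ∧
    Submodule.span A (Set.range c) =
      LinearMap.ker (Finsupp.linearCombination A fun i => ini ℳ (x i))

/-- Set version of a homogeneous generating set of syzygies of initial terms. -/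
def IsHomogSyzygyGensSet (X : Set M) (C : Set (M →₀ A)) : Prop :=
  (∀ c ∈ C, ↑c.support ⊆ X) ∧
  (∀ c ∈ C, ∃ d : ℤ, ∀ m : M, c m ∈ 𝒜 (d - mdeg ℳ m)) ∧
  Submodule.span A C =
    Finsupp.supported A A X ⊓
      LinearMap.ker (Finsupp.linearCombination A fun m : M => ini ℳ m)

/-- The elements `z = ∑ c m • m` attached to a set of syzygies `C`. -/
def zElems (C : Set (M →₀ A)) : Set M :=
  (fun c : M →₀ A => c.sum fun m coeff => coeff • m) '' C

/-- One step of Buchberger's algorithm: adjoin the `z`-elements of a homogeneous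
generating set of syzygies. -/
def BuchbergerStep (X Y : Set M) : Prop :=
  ∃ C : Set (M →₀ A), IsHomogSyzygyGensSet 𝒜 ℳ X C ∧ Y = X ∪ zElems C

end Defs

section Decomposition

variable {σ M : Type*} [AddCommMonoid M] [SetLike σ M] [AddSubmonoidClass σ M]
  (ℳ : ℤ → σ) [Decomposition ℳ]

theorem finite_setOf_decompose_ne_zero (x : M) :
    {n : ℤ | (decompose ℳ x n : M) ≠ 0}.Finite := by
  classical
  refine (decompose ℳ x).support.finite_toSet.subset fun n hn => ?_
  simpa [ZeroMemClass.coe_eq_zero] using hn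

theorem decompose_eq_zero_of_mdeg_lt {x : M} {n : ℤ} (h : mdeg ℳ x < n) :
    (decompose ℳ x n : M) = 0 := by
  by_contra hn
  exact h.not_ge (le_csSup (finite_setOf_decompose_ne_zero ℳ x).bddAbove hn)

theorem decompose_mdeg_ne_zero {x : M} (hx : x ≠ 0) : (decompose ℳ x (mdeg ℳ x) : M) ≠ 0 := by
  classical
  have hne : {n : ℤ | (decompose ℳ x n : M) ≠ 0}.Nonempty := by
    by_contra! h
    refine hx ((sum_support_decompose ℳ x).symm.trans (Finset.sum_eq_zero fun n _ => ?_))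
    simpa using Set.eq_empty_iff_forall_notMem.mp h n
  exact hne.csSup_mem (finite_setOf_decompose_ne_zero ℳ x)

theorem mdeg_eq_of_decompose {x : M} {d : ℤ} (hd : (decompose ℳ x d : M) ≠ 0)
    (hgt : ∀ n, d < n → (decompose ℳ x n : M) = 0) : mdeg ℳ x = d :=
  IsGreatest.csSup_eq ⟨hd, fun n hn => le_of_not_gt fun h => hn (hgt n h)⟩

theorem ini_zero : ini ℳ (0 : M) = 0 := by
  simp [ini]

end Decomposition

theorem ini_mem_iniSub {A M : Type*} [CommRing A] [AddCommGroup M] [Module A M]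
    (ℳ : ℤ → AddSubgroup M) [Decomposition ℳ] {N : Submodule A M} {x : M} (hx : x ∈ N) :
    ini ℳ x ∈ iniSub ℳ N := by
  by_cases h0 : x = 0
  · simp [h0, ini_zero]
  · exact Submodule.subset_span ⟨x, hx, h0, rfl⟩

section Quotient

variable {A M : Type*} [CommRing A] [AddCommGroup M] [Module A M]
  {ℳ : ℤ → AddSubgroup M} [Decomposition ℳ]
  {M' : Submodule A M} {ℳQ : ℤ → AddSubgroup (M ⧸ M')} [Decomposition ℳQ]

theorem decompose_mkQ (hcompat : ∀ n : ℤ, ℳQ n = (ℳ n).map M'.mkQ.toAddMonoidHom)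
    (x : M) (n : ℤ) :
    (decompose ℳQ (M'.mkQ x) n : M ⧸ M') = M'.mkQ (decompose ℳ x n) := by
  induction x using Decomposition.inductionOn ℳ with
  | zero => simp
  | @homogeneous i m =>
      have hm : M'.mkQ (m : M) ∈ ℳQ i := by
        rw [hcompat]
        exact ⟨m, m.2, rfl⟩
      by_cases h : n = i
      · subst h
        rw [decompose_of_mem_same ℳQ hm, decompose_of_mem_same ℳ m.2]
      · rw [decompose_of_mem_ne ℳQ hm (Ne.symm h), decompose_of_mem_ne ℳ m.2 (Ne.symm h),
          map_zero]
  | add a b ha hb =>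
      simp only [map_add, decompose_add, DirectSum.add_apply, AddSubgroup.coe_add, ha, hb]

variable (hcompat : ∀ n : ℤ, ℳQ n = (ℳ n).map M'.mkQ.toAddMonoidHom)
include hcompat

theorem ini_mkQ_of_mkQ_ini_ne_zero {x : M} (h : M'.mkQ (ini ℳ x) ≠ 0) :
    ini ℳQ (M'.mkQ x) = M'.mkQ (ini ℳ x) := by
  have hdeg : mdeg ℳQ (M'.mkQ x) = mdeg ℳ x := by
    refine mdeg_eq_of_decompose ℳQ (by rwa [decompose_mkQ hcompat]) fun n hn => ?_
    rw [decompose_mkQ hcompat, decompose_eq_zero_of_mdeg_lt ℳ hn, map_zero]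
  rw [ini, hdeg, decompose_mkQ hcompat, ini]

theorem map_span_ini_le_span_ini_mkQ {I : Type*} (xt : I → M) :
    (Submodule.span A (Set.range fun i => ini ℳ (xt i))).map M'.mkQ ≤
      Submodule.span A (Set.range fun i => ini ℳQ (M'.mkQ (xt i))) := by
  rw [Submodule.map_span, ← Set.range_comp, Submodule.span_le]
  rintro _ ⟨i, rfl⟩
  by_cases h0 : M'.mkQ (ini ℳ (xt i)) = 0
  · simp [h0]
  · exact Submodule.subset_span ⟨i, ini_mkQ_of_mkQ_ini_ne_zero hcompat h0⟩

/-- Drop the components of an arbitrary lift of `y` above `mdeg y`. -/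
theorem exists_mkQ_eq_and_mkQ_ini_eq {y : M ⧸ M'} (hy : y ≠ 0) :
    ∃ x : M, M'.mkQ x = y ∧ M'.mkQ (ini ℳ x) = ini ℳQ y := by
  classical
  obtain ⟨x, rfl⟩ := M'.mkQ_surjective y
  set d := mdeg ℳQ (M'.mkQ x)
  set t := (decompose ℳ).symm ((decompose ℳ x).filter (· ≤ d))
  have ht : ∀ n, (decompose ℳ t n : M) = if n ≤ d then (decompose ℳ x n : M) else 0 := by
    intro n
    simp only [t, Equiv.apply_symm_apply, DFinsupp.filter_apply]
    split_ifs <;> rfl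
  have hmkQ : M'.mkQ t = M'.mkQ x := by
    refine (decompose ℳQ).injective (DFinsupp.ext fun n => Subtype.ext ?_)
    rw [decompose_mkQ hcompat, decompose_mkQ hcompat, ht]
    split_ifs with hn
    · rfl
    · rw [map_zero, ← decompose_mkQ hcompat,
        decompose_eq_zero_of_mdeg_lt ℳQ (not_le.mp hn)]
  have htd : M'.mkQ (decompose ℳ t d : M) = ini ℳQ (M'.mkQ x) := by
    rw [ht, if_pos le_rfl, ← decompose_mkQ hcompat, ini]
  have hdeg : mdeg ℳ t = d := by
    refine mdeg_eq_of_decompose ℳ (fun h => ?_) fun n hn => by rw [ht, if_neg hn.not_ge]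
    rw [h, map_zero] at htd
    exact decompose_mdeg_ne_zero ℳQ hy htd.symm
  exact ⟨t, hmkQ, by rw [ini, hdeg, htd]⟩

end Quotient

theorem stmt_18_general {A M : Type*} [CommRing A]
    [AddCommGroup M] [Module A M] (ℳ : ℤ → AddSubgroup M) [DirectSum.Decomposition ℳ]
    (M' : Submodule A M)
    (ℳQ : ℤ → AddSubgroup (M ⧸ M')) [DirectSum.Decomposition ℳQ]
    (hcompat : ∀ n : ℤ, ℳQ n = (ℳ n).map M'.mkQ.toAddMonoidHom)
    {I : Type*} (N : Submodule A (M ⧸ M')) (xt : I → M)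
    (hGB : IsGrobnerBasis ℳ (N.comap M'.mkQ) xt) :
    IsGrobnerBasis ℳQ N (fun i => M'.mkQ (xt i)) := by
  obtain ⟨hmem, hspan⟩ := hGB
  refine ⟨hmem, le_antisymm ?_ ?_⟩
  · rw [Submodule.span_le]
    rintro _ ⟨i, rfl⟩
    exact ini_mem_iniSub ℳQ (hmem i)
  · rw [iniSub, Submodule.span_le]
    rintro _ ⟨y, hyN, hy0, rfl⟩
    obtain ⟨x, rfl, hini⟩ := exists_mkQ_eq_and_mkQ_ini_eq hcompat hy0
    have hx : ini ℳ x ∈ Submodule.span A (Set.range fun i => ini ℳ (xt i)) :=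
      hspan ▸ ini_mem_iniSub ℳ (N := N.comap M'.mkQ) hyN
    rw [← hini]
    exact map_span_ini_le_span_ini_mkQ hcompat xt (Submodule.mem_map_of_mem hx)

/-- If `{x̃ᵢ}` is a Gröbner basis for the preimage `Ñ` in `M` of a submodule
`N ⊆ M/M'`, then the images `xᵢ` form a Gröbner basis for `N`. -/
theorem stmt_18 {A M : Type*} [CommRing A] (𝒜 : ℤ → AddSubgroup A) [GradedRing 𝒜]
    [AddCommGroup M] [Module A M] (ℳ : ℤ → AddSubgroup M) [DirectSum.Decomposition ℳ]
    [SetLike.GradedSMul 𝒜 ℳ]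
    (hA : RingNonnegGraded 𝒜) (hM : ModuleBddBelow ℳ)
    (M' : Submodule A M) (hhom : IsHomogSubmodule ℳ M')
    (ℳQ : ℤ → AddSubgroup (M ⧸ M')) [DirectSum.Decomposition ℳQ]
    (hcompat : ∀ n : ℤ, ℳQ n = (ℳ n).map M'.mkQ.toAddMonoidHom)
    {I : Type*} (N : Submodule A (M ⧸ M')) (xt : I → M)
    (hGB : IsGrobnerBasis ℳ (N.comap M'.mkQ) xt) :
    IsGrobnerBasis ℳQ N (fun i => M'.mkQ (xt i)) :=
  stmt_18_general ℳ M' ℳQ hcompat N xt hGB
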